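/- The curl operator, restricted to the subspace x ∧ [P_{n}(ℝ³)]³ of vector polynomials (cross products of the position vector with vector polynomials of degree at most n), is injective; hence it is an isomorphism onto its image, which is the space of divergence-free vector polynomials of degree at most n. -/

import Mathlib

/-!
With `E = x · ∇` the Euler operator, which multiplies a monomial by its degree, every vector
polynomial satisfies `∇(x · w) = w + E w + x ∧ curl w`. For `w = x ∧ t` the left side vanishes,
so `curl w = 0` forces `(1 + E) w = 0`, i.e. `w = 0`: this is injectivity.
For the image, `curl (x ∧ r) = x div r - (2 + E) r`. Given `u` with `div u = 0`, the polynomial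
`r = -(2 + E)⁻¹ u` is again divergence free, because `∂ᵢ (2 + E)⁻¹ = (3 + E)⁻¹ ∂ᵢ`, so
`curl (x ∧ r) = u`; conversely `div curl = 0` and `curl` lowers the degree by one.
-/

open MvPolynomial

noncomputable section

abbrev Poly3 := MvPolynomial (Fin 3) ℝ

/-- Curl of a vector polynomial. -/
def pcurl (v : Fin 3 → Poly3) : Fin 3 → Poly3 :=
  ![pderiv 1 (v 2) - pderiv 2 (v 1),
    pderiv 2 (v 0) - pderiv 0 (v 2),
    pderiv 0 (v 1) - pderiv 1 (v 0)]

/-- Divergence of a vector polynomial. -/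
def pdiv (v : Fin 3 → Poly3) : Poly3 := ∑ i, pderiv i (v i)

/-- Cross product `x ∧ p` of the position vector with a vector polynomial. -/
def xcross (p : Fin 3 → Poly3) : Fin 3 → Poly3 :=
  ![X 1 * p 2 - X 2 * p 1,
    X 2 * p 0 - X 0 * p 2,
    X 0 * p 1 - X 1 * p 0]

namespace MvPolynomial

section Pderiv

variable {σ R : Type*} [CommSemiring R]

theorem pderiv_pderiv_comm (i j : σ) (p : MvPolynomial σ R) :
    pderiv i (pderiv j p) = pderiv j (pderiv i p) := by
  classical
  obtain rfl | h := eq_or_ne i j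
  · rfl
  ext m
  simp only [coeff_pderiv, Finsupp.add_apply, Finsupp.single_apply, if_neg h, if_neg h.symm,
    add_zero, add_right_comm m]
  ring

theorem totalDegree_pderiv_le (i : σ) (p : MvPolynomial σ R) :
    (pderiv i p).totalDegree ≤ p.totalDegree - 1 := by
  refine Finset.sup_le fun m hm => ?_
  have hcoeff : coeff (m + Finsupp.single i 1) p ≠ 0 :=
    left_ne_zero_of_mul (by rwa [← coeff_pderiv, ← mem_support_iff])
  have := le_totalDegree (mem_support_iff.mpr hcoeff)
  change (m + Finsupp.single i 1).degree ≤ _ at this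
  change m.degree ≤ _
  rw [map_add, Finsupp.degree_single] at this
  omega

end Pderiv

section Euler

variable {σ R : Type*} [CommSemiring R] [Fintype σ]

def euler : Derivation R (MvPolynomial σ R) (MvPolynomial σ R) :=
  ∑ i : σ, (X i : MvPolynomial σ R) • pderiv i

theorem euler_apply (p : MvPolynomial σ R) : euler p = ∑ i, X i * pderiv i p := by
  rw [euler, ← Derivation.coeFnAddMonoidHom_apply, map_sum]
  simp

theorem euler_monomial (m : σ →₀ ℕ) (a : R) :
    euler (monomial m a) = m.degree • monomial m a := by
  simp only [euler_apply, X_mul_pderiv_monomial, ← Finset.sum_smul, Finsupp.degree_eq_sum]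

theorem coeff_euler (p : MvPolynomial σ R) (m : σ →₀ ℕ) :
    coeff m (euler p) = m.degree * coeff m p := by
  classical
  induction p using MvPolynomial.induction_on' with
  | add p q hp hq => simp [hp, hq, mul_add]
  | monomial s a =>
    rw [euler_monomial, coeff_smul, coeff_monomial]
    split_ifs with h <;> simp [h, nsmul_eq_mul]

theorem eq_zero_of_add_euler_eq_zero [NoZeroDivisors R] [CharZero R] {p : MvPolynomial σ R}
    (h : p + euler p = 0) : p = 0 := by
  ext m
  have hm : ((m.degree + 1 : ℕ) : R) * coeff m p = 0 := by
    simpa [coeff_euler, add_mul, add_comm] using congr_arg (coeff m) h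
  exact (mul_eq_zero.mp hm).resolve_left (Nat.cast_ne_zero.mpr m.degree.succ_ne_zero)

end Euler

section DegreeScale

variable {σ R : Type*} [CommSemiring R]

/-- Multiplication by `c k` on the homogeneous component of degree `k`. -/
def degreeScale (c : ℕ → R) : MvPolynomial σ R →ₗ[R] MvPolynomial σ R :=
  (basisMonomials σ R).constr R fun m => monomial m (c m.degree)

theorem degreeScale_monomial (c : ℕ → R) (m : σ →₀ ℕ) (a : R) :
    degreeScale c (monomial m a) = monomial m (c m.degree * a) := by
  have h : degreeScale c (monomial m 1) = monomial m (c m.degree) := by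
    simpa [degreeScale] using (basisMonomials σ R).constr_basis R _ m
  calc degreeScale c (monomial m a) = a • degreeScale c (monomial m 1) := by
        rw [← map_smul, smul_monomial, smul_eq_mul, mul_one]
    _ = monomial m (c m.degree * a) := by rw [h, smul_monomial, smul_eq_mul, mul_comm]

theorem coeff_degreeScale (c : ℕ → R) (p : MvPolynomial σ R) (m : σ →₀ ℕ) :
    coeff m (degreeScale c p) = c m.degree * coeff m p := by
  classical
  induction p using MvPolynomial.induction_on' with
  | add p q hp hq => simp [hp, hq, mul_add]
  | monomial s a =>
    rw [degreeScale_monomial, coeff_monomial, coeff_monomial]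
    split_ifs with h <;> simp [h]

theorem totalDegree_degreeScale_le (c : ℕ → R) (p : MvPolynomial σ R) :
    (degreeScale c p).totalDegree ≤ p.totalDegree :=
  totalDegree_le_of_support_subset fun m hm => by
    rw [mem_support_iff, coeff_degreeScale] at *
    exact right_ne_zero_of_mul hm

theorem pderiv_degreeScale (c : ℕ → R) (i : σ) (p : MvPolynomial σ R) :
    pderiv i (degreeScale c p) = degreeScale (fun k => c (k + 1)) (pderiv i p) := by
  ext m
  simp only [coeff_pderiv, coeff_degreeScale, map_add, Finsupp.degree_single]
  ring

theorem smul_add_euler_degreeScale_inv [Fintype σ] {K : Type*} [Field K] {a : K}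
    (ha : ∀ k : ℕ, a + k ≠ 0) (p : MvPolynomial σ K) :
    a • degreeScale (fun k => (a + k)⁻¹) p + euler (degreeScale (fun k => (a + k)⁻¹) p) = p := by
  ext m
  rw [coeff_add, coeff_smul, coeff_euler, coeff_degreeScale, smul_eq_mul]
  field_simp [ha]

end DegreeScale

end MvPolynomial

theorem xcross_zero : xcross 0 = 0 := by
  funext i
  fin_cases i <;> simp [xcross]

theorem xcross_sub (p q : Fin 3 → Poly3) : xcross (p - q) = xcross p - xcross q := by
  funext i
  fin_cases i <;> simp only [xcross, Pi.sub_apply, Fin.isValue, Fin.zero_eta, Fin.mk_one,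
    Fin.reduceFinMk, Matrix.cons_val_zero, Matrix.cons_val_one, Matrix.cons_val] <;> ring

theorem pcurl_sub (v w : Fin 3 → Poly3) : pcurl (v - w) = pcurl v - pcurl w := by
  funext i
  fin_cases i <;> simp only [pcurl, Pi.sub_apply, map_sub, Fin.isValue, Fin.zero_eta, Fin.mk_one,
    Fin.reduceFinMk, Matrix.cons_val_zero, Matrix.cons_val_one, Matrix.cons_val] <;> ring

theorem pdiv_neg (v : Fin 3 → Poly3) : pdiv (-v) = -pdiv v := by
  simp [pdiv]

theorem pdiv_degreeScale (c : ℕ → ℝ) (v : Fin 3 → Poly3) :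
    pdiv (fun i => degreeScale c (v i)) = degreeScale (fun k => c (k + 1)) (pdiv v) := by
  simp only [pdiv, pderiv_degreeScale, map_sum]

theorem pdiv_pcurl (v : Fin 3 → Poly3) : pdiv (pcurl v) = 0 := by
  simp only [pdiv, pcurl, Fin.sum_univ_three, Matrix.cons_val_zero, Matrix.cons_val_one,
    Matrix.cons_val_two, Matrix.head_cons, Matrix.tail_cons, map_sub]
  rw [pderiv_pderiv_comm 0 1, pderiv_pderiv_comm 0 2, pderiv_pderiv_comm 1 2]
  ring

theorem sum_X_mul_xcross (p : Fin 3 → Poly3) : ∑ j, X j * xcross p j = 0 := by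
  simp only [xcross, Fin.sum_univ_three, Fin.isValue, Matrix.cons_val_zero, Matrix.cons_val_one,
    Matrix.cons_val]
  ring

theorem pderiv_sum_X_mul (w : Fin 3 → Poly3) (i : Fin 3) :
    pderiv i (∑ j, X j * w j) = w i + euler (w i) + xcross (pcurl w) i := by
  fin_cases i <;>
  · simp only [euler_apply, pcurl, xcross, Fin.sum_univ_three, map_add, Derivation.leibniz,
      smul_eq_mul,
      pderiv_X_self, pderiv_X_of_ne, ne_eq, Fin.reduceEq, not_false_eq_true, mul_zero, add_zero,
      mul_one, Fin.isValue, Fin.zero_eta, Fin.mk_one, Fin.reduceFinMk, Matrix.cons_val_zero,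
      Matrix.cons_val_one, Matrix.cons_val]
    ring

theorem pcurl_xcross (p : Fin 3 → Poly3) (i : Fin 3) :
    pcurl (xcross p) i = X i * pdiv p - ((2 : ℝ) • p i + euler (p i)) := by
  fin_cases i <;>
  · simp only [euler_apply, pcurl, xcross, pdiv, Fin.sum_univ_three, two_smul, map_sub,
      Derivation.leibniz, smul_eq_mul,
      pderiv_X_self, pderiv_X_of_ne, ne_eq, Fin.reduceEq, not_false_eq_true, mul_zero, add_zero,
      mul_one, Fin.isValue, Fin.zero_eta, Fin.mk_one, Fin.reduceFinMk, Matrix.cons_val_zero,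
      Matrix.cons_val_one, Matrix.cons_val]
    ring

theorem xcross_eq_zero_of_pcurl_xcross_eq_zero {p : Fin 3 → Poly3} (h : pcurl (xcross p) = 0) :
    xcross p = 0 := by
  funext i
  have hgrad := pderiv_sum_X_mul (xcross p) i
  rw [sum_X_mul_xcross, map_zero, h, xcross_zero, Pi.zero_apply, add_zero] at hgrad
  exact eq_zero_of_add_euler_eq_zero hgrad.symm

theorem totalDegree_xcross_le {n : ℕ} {p : Fin 3 → Poly3} (hp : ∀ i, (p i).totalDegree ≤ n)
    (i : Fin 3) : (xcross p i).totalDegree ≤ n + 1 := by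
  have key (a b c d : Fin 3) : (X a * p b - X c * p d).totalDegree ≤ n + 1 := by
    have := hp b
    have := hp d
    refine (totalDegree_sub _ _).trans (max_le ?_ ?_) <;>
      refine (totalDegree_mul _ _).trans ?_ <;>
      rw [totalDegree_X] <;> omega
  fin_cases i <;> exact key ..

theorem totalDegree_pcurl_le {n : ℕ} {v : Fin 3 → Poly3} (hv : ∀ i, (v i).totalDegree ≤ n + 1)
    (i : Fin 3) : (pcurl v i).totalDegree ≤ n := by
  have key (a b c d : Fin 3) : (pderiv a (v b) - pderiv c (v d)).totalDegree ≤ n := by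
    have := hv b
    have := hv d
    refine (totalDegree_sub _ _).trans (max_le ?_ ?_) <;>
      exact (totalDegree_pderiv_le _ _).trans (by omega)
  fin_cases i <;> exact key ..

/-- The curl operator restricted to `x ∧ [P_n(ℝ³)]³` is injective, and its image is
the space of divergence-free vector polynomials of degree at most `n`. -/
theorem pcurl_injective_on_xcross (n : ℕ) :
    (∀ r s : Fin 3 → Poly3, (∀ i, (r i).totalDegree ≤ n) → (∀ i, (s i).totalDegree ≤ n) →
        pcurl (xcross r) = pcurl (xcross s) → xcross r = xcross s) ∧
    {u : Fin 3 → Poly3 |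
        ∃ r : Fin 3 → Poly3, (∀ i, (r i).totalDegree ≤ n) ∧ u = pcurl (xcross r)}
      = {u : Fin 3 → Poly3 | (∀ i, (u i).totalDegree ≤ n) ∧ pdiv u = 0} := by
  refine ⟨fun r s _ _ h => ?_, Set.ext fun u => ⟨?_, ?_⟩⟩
  · have hzero : pcurl (xcross (r - s)) = 0 := by rw [xcross_sub, pcurl_sub, h, sub_self]
    rw [← sub_eq_zero, ← xcross_sub]
    exact xcross_eq_zero_of_pcurl_xcross_eq_zero hzero
  · rintro ⟨r, hr, rfl⟩
    exact ⟨totalDegree_pcurl_le (totalDegree_xcross_le hr), pdiv_pcurl _⟩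
  · rintro ⟨hu, hdiv⟩
    let q i := degreeScale (fun k => ((2 : ℝ) + k)⁻¹) (u i)
    have hq : pdiv q = 0 := by rw [pdiv_degreeScale, hdiv, map_zero]
    refine ⟨-q, fun i => ?_, funext fun i => ?_⟩
    · rw [Pi.neg_apply, totalDegree_neg]
      exact (totalDegree_degreeScale_le _ _).trans (hu i)
    · rw [pcurl_xcross, pdiv_neg, hq, Pi.neg_apply, map_neg, smul_neg, neg_zero, mul_zero,
        zero_sub, ← neg_add, neg_neg]
      exact (smul_add_euler_degreeScale_inv (fun k => by positivity) (u i)).symm
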